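/- Let G be a finite simple graph, let P = v_0-v_1-…-v_p be a path of G with p odd, p ≥ 3, whose only chord is v_0v_2, and let z be a vertex not on P adjacent to v_0 and v_p but adjacent to neither v_1 nor v_2 (a near-obstruction of Type 1). Let r be the smallest integer such that z is adjacent to v_r (so r ≥ 3). If r is odd, then z, v_0, v_1, …, v_r induce an odd cycle with v_0v_2 as its only chord; if r is even, then z, v_0, v_2, v_3, …, v_r induce a chordless odd cycle of length at least five. In either case G contains a Meyniel obstruction. -/

import Mathlib

open SimpleGraph

/-- The set of chords of a closed walk `c` in `G`: edges of `G` joining two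
vertices of `c` that are not edges of `c` (i.e. not consecutive on `c`). -/
def SimpleGraph.cycleChords {V : Type*} (G : SimpleGraph V) {u : V} (c : G.Walk u u) :
    Set (Sym2 V) :=
  {e | e ∈ G.edgeSet ∧ (∀ x ∈ e, x ∈ c.support) ∧ e ∉ c.edges}

/-- A Meyniel obstruction in `G` is an odd cycle of length at least five with
at most one chord. -/
def SimpleGraph.HasMeynielObstruction {V : Type*} (G : SimpleGraph V) : Prop :=
  ∃ (u : V) (c : G.Walk u u), c.IsCycle ∧ Odd c.length ∧ 5 ≤ c.length ∧
    (G.cycleChords c).ncard ≤ 1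

/-- `v i` and `v j` span a chord of the path `v 0 - v 1 - ⋯ - v p`: an edge of `G`
joining two non-consecutive vertices of the path (with `i < j`). -/
def SimpleGraph.IsPathChord {V : Type*} (G : SimpleGraph V) (p : ℕ) (v : ℕ → V)
    (i j : ℕ) : Prop :=
  i + 2 ≤ j ∧ j ≤ p ∧ G.Adj (v i) (v j)

/-! Since the vertices `z, v 0, …, v r` are distinct, going around them in this order is a cycle,
and its chords are the chords of the path `v 0 - ⋯ - v r` together with the edges from `z` to
interior vertices. Minimality of `r` excludes the latter and the hypothesis on `P` leaves only
`v 0 v 2`, so for odd `r` this is an odd cycle of length `r + 2` with one chord. For even `r`,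
shortcutting `v 1` along `v 0 v 2` turns that chord into an edge and gives a chordless cycle of odd
length `r + 1 ≥ 5`. -/

namespace SimpleGraph

variable {V : Type*} {G : SimpleGraph V}

lemma IsPathChord.mono {n m : ℕ} {w : ℕ → V} {i j : ℕ} (h : G.IsPathChord n w i j)
    (hnm : n ≤ m) : G.IsPathChord m w i j :=
  ⟨h.1, h.2.1.trans hnm, h.2.2⟩

def walkOfSeq (w : ℕ → V) : (n : ℕ) → (∀ i < n, G.Adj (w i) (w (i + 1))) → G.Walk (w 0) (w n)
  | 0, _ => .nil
  | n + 1, h => (walkOfSeq w n fun i hi => h i (by omega)).concat (h n n.lt_succ_self)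

section walkOfSeq

variable (w : ℕ → V) (n : ℕ) (hadj : ∀ i < n, G.Adj (w i) (w (i + 1)))

@[simp] lemma length_walkOfSeq : (walkOfSeq w n hadj).length = n := by
  induction n with
  | zero => rfl
  | succ n ih => simp [walkOfSeq, ih]

@[simp] lemma support_walkOfSeq : (walkOfSeq w n hadj).support = (List.range (n + 1)).map w := by
  induction n with
  | zero => rfl
  | succ n ih => simp [walkOfSeq, ih, List.range_succ]

@[simp] lemma edges_walkOfSeq :
    (walkOfSeq w n hadj).edges = (List.range n).map fun i => s(w i, w (i + 1)) := by
  induction n with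
  | zero => rfl
  | succ n ih => simp [walkOfSeq, ih, List.range_succ]

lemma isPath_walkOfSeq (hinj : Set.InjOn w (Set.Iic n)) : (walkOfSeq w n hadj).IsPath := by
  rw [Walk.isPath_def, support_walkOfSeq]
  exact List.nodup_range.map_on fun i hi j hj hij =>
    hinj (by simpa [Nat.lt_succ_iff] using hi) (by simpa [Nat.lt_succ_iff] using hj) hij

end walkOfSeq

def cycleThrough (z : V) (w : ℕ → V) (n : ℕ) (hadj : ∀ i < n, G.Adj (w i) (w (i + 1)))
    (h0 : G.Adj z (w 0)) (hn : G.Adj (w n) z) : G.Walk z z :=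
  .cons h0 ((walkOfSeq w n hadj).concat hn)

section cycleThrough

variable {z : V} {w : ℕ → V} {n : ℕ} {hadj : ∀ i < n, G.Adj (w i) (w (i + 1))}
  {h0 : G.Adj z (w 0)} {hn : G.Adj (w n) z}

@[simp] lemma length_cycleThrough : (cycleThrough z w n hadj h0 hn).length = n + 2 := by
  simp [cycleThrough]

lemma setOf_mem_support_cycleThrough :
    {x | x ∈ (cycleThrough z w n hadj h0 hn).support} = insert z (w '' Set.Iic n) := by
  ext x
  simp only [cycleThrough, Set.mem_ofPred_eq, Walk.support_cons, Walk.support_concat,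
    support_walkOfSeq, List.mem_cons, List.mem_append, List.mem_map, List.mem_range,
    List.not_mem_nil, or_false, Set.mem_insert_iff, Set.mem_image, Set.mem_Iic, Nat.lt_succ_iff]
  grind

lemma mem_edges_cycleThrough {e : Sym2 V} :
    e ∈ (cycleThrough z w n hadj h0 hn).edges ↔
      e = s(z, w 0) ∨ (∃ i < n, s(w i, w (i + 1)) = e) ∨ e = s(w n, z) := by
  simp [cycleThrough, or_comm]

lemma isCycle_cycleThrough (hn1 : 1 ≤ n) (hinj : Set.InjOn w (Set.Iic n))
    (hz : z ∉ w '' Set.Iic n) : (cycleThrough z w n hadj h0 hn).IsCycle := by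
  have hz_supp : z ∉ (walkOfSeq w n hadj).support := by
    simpa [Nat.lt_succ_iff, eq_comm] using hz
  rw [cycleThrough, Walk.cons_isCycle_iff, Walk.concat_isPath_iff, Walk.edges_concat,
    List.concat_eq_append, List.mem_append, List.mem_singleton, Sym2.eq_iff]
  refine ⟨⟨isPath_walkOfSeq w n hadj hinj, hz_supp⟩, ?_⟩
  rintro (h | ⟨hzn, -⟩ | ⟨-, h0n⟩)
  · exact hz_supp (Walk.fst_mem_support_of_mem_edges _ h)
  · exact hz ⟨n, Set.self_mem_Iic, hzn.symm⟩
  · have := hinj (Set.mem_Iic.mpr (Nat.zero_le n)) (Set.mem_Iic.mpr le_rfl) h0n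
    omega

lemma mk_mem_edges_cycleThrough_iff (hinj : Set.InjOn w (Set.Iic n))
    (hz : z ∉ w '' Set.Iic n) {i j : ℕ} (hij : i < j) (hj : j ≤ n) :
    s(w i, w j) ∈ (cycleThrough z w n hadj h0 hn).edges ↔ j = i + 1 := by
  have hw : ∀ {k l}, k ≤ n → l ≤ n → w k = w l → k = l := fun hk hl h => hinj hk hl h
  have hzw : ∀ {k}, k ≤ n → z ≠ w k := fun hk h => hz ⟨_, hk, h.symm⟩
  rw [mem_edges_cycleThrough]
  constructor
  · rintro (h | ⟨k, hk, h⟩ | h) <;> rw [Sym2.eq_iff] at h <;> grind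
  · rintro rfl
    exact Or.inr (Or.inl ⟨i, by omega, rfl⟩)

lemma mk_mem_edges_cycleThrough_iff_of_left (hinj : Set.InjOn w (Set.Iic n))
    (hz : z ∉ w '' Set.Iic n) {i : ℕ} (hi : i ≤ n) :
    s(z, w i) ∈ (cycleThrough z w n hadj h0 hn).edges ↔ i = 0 ∨ i = n := by
  have hw : ∀ {k l}, k ≤ n → l ≤ n → w k = w l → k = l := fun hk hl h => hinj hk hl h
  have hzw : ∀ {k}, k ≤ n → z ≠ w k := fun hk h => hz ⟨_, hk, h.symm⟩
  rw [mem_edges_cycleThrough]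
  constructor
  · rintro (h | ⟨k, hk, h⟩ | h) <;> rw [Sym2.eq_iff] at h <;> grind
  · rintro (rfl | rfl)
    · exact Or.inl rfl
    · exact Or.inr (Or.inr Sym2.eq_swap)

lemma mem_cycleChords_cycleThrough (hinj : Set.InjOn w (Set.Iic n))
    (hz : z ∉ w '' Set.Iic n) {e : Sym2 V} :
    e ∈ G.cycleChords (cycleThrough z w n hadj h0 hn) ↔
      (∃ i j, G.IsPathChord n w i j ∧ e = s(w i, w j)) ∨
      (∃ i, 0 < i ∧ i < n ∧ G.Adj z (w i) ∧ e = s(z, w i)) := by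
  have hsupp : ∀ x, x ∈ (cycleThrough z w n hadj h0 hn).support ↔ x = z ∨ ∃ i ≤ n, w i = x :=
    fun x => Set.ext_iff.mp setOf_mem_support_cycleThrough x
  simp only [cycleChords, Set.mem_ofPred_eq]
  constructor
  · induction e using Sym2.ind with
    | _ a b =>
    simp only [Sym2.forall_mem_pair, hsupp]
    rintro ⟨hab, ⟨ha | ⟨i, hi, rfl⟩, hb | ⟨j, hj, rfl⟩⟩, hne⟩
    · exact (hab.ne (ha.trans hb.symm)).elim
    · subst ha
      rw [mk_mem_edges_cycleThrough_iff_of_left hinj hz hj] at hne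
      exact Or.inr ⟨j, by omega, by omega, hab, rfl⟩
    · subst hb
      rw [Sym2.eq_swap, mk_mem_edges_cycleThrough_iff_of_left hinj hz hi] at hne
      exact Or.inr ⟨i, by omega, by omega, hab.symm, Sym2.eq_swap⟩
    · rcases lt_trichotomy i j with hij | rfl | hji
      · rw [mk_mem_edges_cycleThrough_iff hinj hz hij hj] at hne
        exact Or.inl ⟨i, j, ⟨by omega, hj, hab⟩, rfl⟩
      · exact (hab.ne rfl).elim
      · rw [Sym2.eq_swap, mk_mem_edges_cycleThrough_iff hinj hz hji hi] at hne
        exact Or.inl ⟨j, i, ⟨by omega, hi, hab.symm⟩, Sym2.eq_swap⟩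
  · rintro (⟨i, j, ⟨hij, hj, hadj⟩, rfl⟩ | ⟨i, hi0, hin, hzi, rfl⟩) <;>
      simp only [mem_edgeSet, Sym2.forall_mem_pair, hsupp]
    · rw [mk_mem_edges_cycleThrough_iff hinj hz (by omega) hj]
      exact ⟨hadj, ⟨Or.inr ⟨i, by omega, rfl⟩, Or.inr ⟨j, hj, rfl⟩⟩, by omega⟩
    · rw [mk_mem_edges_cycleThrough_iff_of_left hinj hz hin.le]
      exact ⟨hzi, ⟨Or.inl trivial, Or.inr ⟨i, hin.le, rfl⟩⟩, by omega⟩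

end cycleThrough

lemma exists_isCycle_cycleChords_eq_singleton {v : ℕ → V} {z : V} {r : ℕ} (hr : 2 ≤ r)
    (hinj : Set.InjOn v (Set.Iic r)) (hpath : ∀ i < r, G.Adj (v i) (v (i + 1)))
    (hchord : G.Adj (v 0) (v 2)) (honly : ∀ i j, G.IsPathChord r v i j → i = 0 ∧ j = 2)
    (hz : z ∉ v '' Set.Iic r) (hz0 : G.Adj z (v 0)) (hzr : G.Adj z (v r))
    (hzint : ∀ i, 1 ≤ i → i < r → ¬ G.Adj z (v i)) :
    ∃ c : G.Walk z z, c.IsCycle ∧ c.length = r + 2 ∧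
      {x | x ∈ c.support} = insert z (v '' Set.Iic r) ∧ G.cycleChords c = {s(v 0, v 2)} := by
  refine ⟨cycleThrough z v r hpath hz0 hzr.symm, isCycle_cycleThrough (by omega) hinj hz,
    length_cycleThrough, setOf_mem_support_cycleThrough, ?_⟩
  ext e
  rw [mem_cycleChords_cycleThrough hinj hz, Set.mem_singleton_iff]
  constructor
  · rintro (⟨i, j, hij, rfl⟩ | ⟨i, hi0, hir, hzi, -⟩)
    · obtain ⟨rfl, rfl⟩ := honly i j hij
      rfl
    · exact (hzint i hi0 hir hzi).elim
  · rintro rfl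
    exact Or.inl ⟨0, 2, ⟨le_rfl, hr, hchord⟩, rfl⟩

/-- Reading a path `v` through `skipOne` replaces the detour through `v 1` by the chord
`v 0 v 2`. -/
def skipOne (i : ℕ) : ℕ := if i = 0 then 0 else i + 1

lemma skipOne_injective : Function.Injective skipOne := by
  intro i j h
  unfold skipOne at h
  split_ifs at h <;> omega

lemma mapsTo_skipOne_Iic (n : ℕ) : Set.MapsTo skipOne (Set.Iic n) (Set.Iic (n + 1)) := by
  intro i hi
  simp only [Set.mem_Iic, skipOne] at hi ⊢
  split_ifs <;> omega

lemma image_skipOne_Iic (n : ℕ) : skipOne '' Set.Iic n = insert 0 (Set.Icc 2 (n + 1)) := by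
  ext k
  simp only [Set.mem_image, Set.mem_Iic, Set.mem_insert_iff, Set.mem_Icc, skipOne]
  constructor
  · rintro ⟨i, hi, rfl⟩
    split_ifs <;> omega
  · rintro (rfl | hk)
    · exact ⟨0, Nat.zero_le n, rfl⟩
    · exact ⟨k - 1, by omega, by rw [if_neg (by omega)]; omega⟩

lemma exists_isCycle_cycleChords_eq_empty {v : ℕ → V} {z : V} {n : ℕ} (hn : 1 ≤ n)
    (hinj : Set.InjOn v (Set.Iic (n + 1))) (hpath : ∀ i < n + 1, G.Adj (v i) (v (i + 1)))
    (hchord : G.Adj (v 0) (v 2)) (honly : ∀ i j, G.IsPathChord (n + 1) v i j → i = 0 ∧ j = 2)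
    (hz : z ∉ v '' Set.Iic (n + 1)) (hz0 : G.Adj z (v 0)) (hzn : G.Adj z (v (n + 1)))
    (hzint : ∀ i, 2 ≤ i → i < n + 1 → ¬ G.Adj z (v i)) :
    ∃ c : G.Walk z z, c.IsCycle ∧ c.length = n + 2 ∧
      {x | x ∈ c.support} = insert z (insert (v 0) (v '' Set.Icc 2 (n + 1))) ∧
      G.cycleChords c = ∅ := by
  have hw_adj : ∀ i < n, G.Adj ((v ∘ skipOne) i) ((v ∘ skipOne) (i + 1)) := by
    rintro (_ | i) hi
    · exact hchord
    · exact hpath (i + 2) (by omega)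
  have hw_inj : Set.InjOn (v ∘ skipOne) (Set.Iic n) :=
    hinj.comp skipOne_injective.injOn (mapsTo_skipOne_Iic n)
  have hz' : z ∉ (v ∘ skipOne) '' Set.Iic n := by
    rw [Set.image_comp]
    exact fun h => hz (Set.image_mono (mapsTo_skipOne_Iic n).image_subset h)
  have hw_first : G.Adj z ((v ∘ skipOne) 0) := hz0
  have hw_last : G.Adj ((v ∘ skipOne) n) z := by
    simpa [skipOne, Nat.one_le_iff_ne_zero.mp hn] using hzn.symm
  refine ⟨cycleThrough z (v ∘ skipOne) n hw_adj hw_first hw_last,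
    isCycle_cycleThrough hn hw_inj hz', length_cycleThrough, ?_, ?_⟩
  · rw [setOf_mem_support_cycleThrough, Set.image_comp, image_skipOne_Iic, Set.image_insert_eq]
  · refine Set.eq_empty_of_forall_notMem fun e he => ?_
    rcases (mem_cycleChords_cycleThrough hw_inj hz').mp he with
      ⟨i, j, ⟨hij, hjn, hadj⟩, -⟩ | ⟨i, hi0, hin, hzi, -⟩
    · have hj : skipOne j = j + 1 := if_neg (by omega)
      have hi : skipOne i ≤ i + 1 := by unfold skipOne; split_ifs <;> omega
      have := (honly _ _ ⟨by omega, by omega, hadj⟩).2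
      omega
    · exact hzint (i + 1) (by omega) (by omega) (by simpa [skipOne, hi0.ne'] using hzi)

end SimpleGraph

theorem type1_nearObstruction_meynielObstruction_general {V : Type*}
    (G : SimpleGraph V) (p : ℕ) (v : ℕ → V) (z : V) (r : ℕ)
    (hinj : Set.InjOn v (Set.Iic p))
    (hpath : ∀ i, i < p → G.Adj (v i) (v (i + 1)))
    (hchord : G.Adj (v 0) (v 2))
    (honly : ∀ i j, G.IsPathChord p v i j → i = 0 ∧ j = 2)
    (hz : ∀ i, i ≤ p → z ≠ v i)
    (hz0 : G.Adj z (v 0))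
    (hz1 : ¬ G.Adj z (v 1)) (hz2 : ¬ G.Adj z (v 2))
    (hr1 : 1 ≤ r) (hrp : r ≤ p) (hzr : G.Adj z (v r))
    (hrmin : ∀ i, 1 ≤ i → i < r → ¬ G.Adj z (v i)) :
    ((Odd r → ∃ (u : V) (c : G.Walk u u), c.IsCycle ∧ Odd c.length ∧
        {x | x ∈ c.support} = insert z (v '' Set.Iic r) ∧
        G.cycleChords c = {s(v 0, v 2)}) ∧
     (Even r → ∃ (u : V) (c : G.Walk u u), c.IsCycle ∧ Odd c.length ∧ 5 ≤ c.length ∧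
        {x | x ∈ c.support} = insert z (insert (v 0) (v '' Set.Icc 2 r)) ∧
        G.cycleChords c = ∅)) ∧
    G.HasMeynielObstruction := by
  have hr3 : 3 ≤ r := by
    by_contra! h
    interval_cases r
    exacts [hz1 hzr, hz2 hzr]
  have hinj_r : Set.InjOn v (Set.Iic r) := hinj.mono (Set.Iic_subset_Iic.mpr hrp)
  have hpath_r : ∀ i < r, G.Adj (v i) (v (i + 1)) := fun i hi => hpath i (by omega)
  have honly_r : ∀ i j, G.IsPathChord r v i j → i = 0 ∧ j = 2 :=
    fun i j h => honly i j (h.mono hrp)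
  have hz_r : z ∉ v '' Set.Iic r := fun ⟨i, hi, hvi⟩ => hz i (le_trans hi hrp) hvi.symm
  rcases Nat.even_or_odd r with hr | hr
  · obtain ⟨n, rfl⟩ : ∃ n, r = n + 1 := ⟨r - 1, by omega⟩
    obtain ⟨c, hc, hlen, hsupp, hchords⟩ := exists_isCycle_cycleChords_eq_empty (by omega)
      hinj_r hpath_r hchord honly_r hz_r hz0 hzr fun i hi hin => hrmin i (by omega) hin
    have hodd_len : Odd c.length := hlen ▸ hr.add_one
    have h5 : 5 ≤ c.length := by obtain ⟨k, hk⟩ := hr; omega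
    exact ⟨⟨fun h => absurd hr (Nat.not_even_iff_odd.mpr h),
      fun _ => ⟨z, c, hc, hodd_len, h5, hsupp, hchords⟩⟩, z, c, hc, hodd_len, h5, by simp [hchords]⟩
  · obtain ⟨c, hc, hlen, hsupp, hchords⟩ := exists_isCycle_cycleChords_eq_singleton (by omega)
      hinj_r hpath_r hchord honly_r hz_r hz0 hzr hrmin
    have hodd_len : Odd c.length := hlen ▸ hr.add_even even_two
    exact ⟨⟨fun _ => ⟨z, c, hc, hodd_len, hsupp, hchords⟩,
      fun h => absurd h (Nat.not_even_iff_odd.mpr hr)⟩, z, c, hc, hodd_len, by omega,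
      by simp [hchords]⟩

/-- Near-obstruction of Type 1: `P = v 0 - ⋯ - v p` is a path with `p` odd, `p ≥ 3`,
whose only chord is `v 0 v 2`, and `z` is a vertex off `P` adjacent to `v 0` and `v p`
but to neither `v 1` nor `v 2`.  If `r` is the smallest positive integer with `z`
adjacent to `v r`, then: if `r` is odd, `z, v 0, …, v r` induce an odd cycle with
`v 0 v 2` as its only chord; if `r` is even, `z, v 0, v 2, v 3, …, v r` induce a
chordless odd cycle of length at least five.  In either case `G` contains a Meyniel
obstruction. -/
theorem type1_nearObstruction_meynielObstruction {V : Type*} [Fintype V]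
    (G : SimpleGraph V) (p : ℕ) (v : ℕ → V) (z : V) (r : ℕ)
    (hodd : Odd p) (hp : 3 ≤ p) (hinj : Set.InjOn v (Set.Iic p))
    (hpath : ∀ i, i < p → G.Adj (v i) (v (i + 1)))
    (hchord : G.Adj (v 0) (v 2))
    (honly : ∀ i j, G.IsPathChord p v i j → i = 0 ∧ j = 2)
    (hz : ∀ i, i ≤ p → z ≠ v i)
    (hz0 : G.Adj z (v 0)) (hzp : G.Adj z (v p))
    (hz1 : ¬ G.Adj z (v 1)) (hz2 : ¬ G.Adj z (v 2))
    (hr1 : 1 ≤ r) (hrp : r ≤ p) (hzr : G.Adj z (v r))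
    (hrmin : ∀ i, 1 ≤ i → i < r → ¬ G.Adj z (v i)) :
    ((Odd r → ∃ (u : V) (c : G.Walk u u), c.IsCycle ∧ Odd c.length ∧
        {x | x ∈ c.support} = insert z (v '' Set.Iic r) ∧
        G.cycleChords c = {s(v 0, v 2)}) ∧
     (Even r → ∃ (u : V) (c : G.Walk u u), c.IsCycle ∧ Odd c.length ∧ 5 ≤ c.length ∧
        {x | x ∈ c.support} = insert z (insert (v 0) (v '' Set.Icc 2 r)) ∧
        G.cycleChords c = ∅)) ∧
    G.HasMeynielObstruction :=
  type1_nearObstruction_meynielObstruction_general G p v z r hinj hpath hchord honly hz hz0 hz1 hz2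
    hr1 hrp hzr hrmin
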